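/- Assume Hypothesis (H_C) and let v ∈ L¹_loc([t₀,∞), ℝⁿ). Then the sweeping process with single-valued perturbation has at most one solution: if x₁, x₂ : [t₀,T] → ℝⁿ are absolutely continuous, satisfy xᵢ(t) ∈ C(t) for all t ∈ [t₀,T], ẋᵢ(t) ∈ −N_{C(t)}(xᵢ(t)) + v(t) for a.e. t ∈ [t₀,T], and x₁(t₀) = x₂(t₀), then x₁(t) = x₂(t) for all t ∈ [t₀,T]. -/

import Mathlib

open scoped Pointwise RealInnerProductSpace ENNReal
open Set Metric MeasureTheory

variable {E : Type*} [NormedAddCommGroup E] [InnerProductSpace ℝ E]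

/-- Proximal normal cone to `K` at `x` (empty when `x ∉ K`):
`v ∈ N_K(x)` iff `x ∈ K` and there is `σ ≥ 0` with `⟪v, y - x⟫ ≤ σ‖y - x‖²` for all `y ∈ K`. -/
def proxNormalCone (K : Set E) (x : E) : Set E :=
  {v | x ∈ K ∧ ∃ σ : ℝ, 0 ≤ σ ∧ ∀ y ∈ K, ⟪v, y - x⟫ ≤ σ * ‖y - x‖ ^ 2}

/-- `r`-prox-regularity of a closed set. -/
def ProxRegular (r : ℝ) (C : Set E) : Prop :=
  ∀ x ∈ C, ∀ y ∈ C, ∀ ζ ∈ proxNormalCone C x,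
    ⟪ζ, y - x⟫ ≤ 1 / (2 * r) * ‖ζ‖ * ‖y - x‖ ^ 2

/-- Hypothesis (H_C): values are nonempty, compact, `r`-prox-regular; `L_C`-Lipschitz
for the Hausdorff distance. -/
structure HypC (r L_C : ℝ) (C : ℝ → Set E) : Prop where
  nonempty : ∀ t, 0 ≤ t → (C t).Nonempty
  isCompact : ∀ t, 0 ≤ t → IsCompact (C t)
  proxRegular : ∀ t, 0 ≤ t → ProxRegular r (C t)
  lipschitz : ∀ s t, 0 ≤ s → 0 ≤ t → hausdorffDist (C s) (C t) ≤ L_C * |s - t|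

/-- Hypothesis (H_G): nonempty, closed, convex values, bounded by `M`, `L_G`-Lipschitz
for the Hausdorff distance. -/
structure HypG (M L_G : ℝ) (G : ℝ → E → Set E) : Prop where
  nonempty : ∀ t x, (G t x).Nonempty
  isClosed : ∀ t x, IsClosed (G t x)
  convex : ∀ t x, Convex ℝ (G t x)
  bounded : ∀ t x, ∀ v ∈ G t x, ‖v‖ ≤ M
  lipschitz : ∀ s t (x y : E), hausdorffDist (G s x) (G t y) ≤ L_G * (|s - t| + ‖x - y‖)

/-- Solution of the perturbed sweeping process `ẋ(t) ∈ -N_{C(t)}(x(t)) + G(t, x(t))`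
on `[t0, T]`: an (absolutely continuous) integral of an integrable derivative `x'`
satisfying the differential inclusion a.e., with `x(t) ∈ C(t)` for all `t ∈ [t0, T]`. -/
def IsSweepingSol (C : ℝ → Set E) (G : ℝ → E → Set E) (t0 T : ℝ) (x : ℝ → E) : Prop :=
  (∀ t ∈ Icc t0 T, x t ∈ C t) ∧
  ∃ x' : ℝ → E, IntegrableOn x' (Icc t0 T) ∧
    (∀ t ∈ Icc t0 T, x t = x t0 + ∫ s in t0..t, x' s) ∧
    ∀ᵐ t ∂(volume.restrict (Icc t0 T)),
      x' t ∈ -proxNormalCone (C t) (x t) + G t (x t)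

/-- Minimum time to reach the target `S` subject to the perturbed sweeping process,
starting at `x0 ∈ C t0` at time `t0` (`+∞` if `S` is never reached). -/
noncomputable def minTime (C : ℝ → Set E) (G : ℝ → E → Set E) (S : Set E)
    (t0 : ℝ) (x0 : E) : ℝ≥0∞ :=
  sInf (ENNReal.ofReal '' {a : ℝ | 0 ≤ a ∧ ∃ x : ℝ → E,
    IsSweepingSol C G t0 (t0 + a) x ∧ x t0 = x0 ∧ x (t0 + a) ∈ S})

/-- Proximal normal cone in the product space `ℝ × E` (with the Euclidean product
inner product `⟪(a,v),(b,w)⟫ = a*b + ⟪v,w⟫`). -/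
def proxNormalCone2 (K : Set (ℝ × E)) (q : ℝ × E) : Set (ℝ × E) :=
  {p | q ∈ K ∧ ∃ σ : ℝ, 0 ≤ σ ∧ ∀ q' ∈ K,
    p.1 * (q'.1 - q.1) + ⟪p.2, q'.2 - q.2⟫ ≤ σ * ((q'.1 - q.1) ^ 2 + ‖q'.2 - q.2‖ ^ 2)}

/-- Proximal normal cone in the product space `ℝ × E × ℝ`. -/
def proxNormalCone3 (K : Set (ℝ × E × ℝ)) (q : ℝ × E × ℝ) : Set (ℝ × E × ℝ) :=
  {p | q ∈ K ∧ ∃ σ : ℝ, 0 ≤ σ ∧ ∀ q' ∈ K,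
    p.1 * (q'.1 - q.1) + ⟪p.2.1, q'.2.1 - q.2.1⟫ + p.2.2 * (q'.2.2 - q.2.2) ≤
      σ * ((q'.1 - q.1) ^ 2 + ‖q'.2.1 - q.2.1‖ ^ 2 + (q'.2.2 - q.2.2) ^ 2)}

/-- Proximal normal cone in the product space `E × ℝ`. -/
def proxNormalConeER (K : Set (E × ℝ)) (q : E × ℝ) : Set (E × ℝ) :=
  {p | q ∈ K ∧ ∃ σ : ℝ, 0 ≤ σ ∧ ∀ q' ∈ K,
    ⟪p.1, q'.1 - q.1⟫ + p.2 * (q'.2 - q.2) ≤ σ * (‖q'.1 - q.1‖ ^ 2 + (q'.2 - q.2) ^ 2)}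

/-- The graph of the moving set `C`, i.e. `{(t,x) : t ≥ 0, x ∈ C(t)}`. -/
def graphSet (C : ℝ → Set E) : Set (ℝ × E) := {q | 0 ≤ q.1 ∧ q.2 ∈ C q.1}

/-! For two solutions, `ζᵢ := v - ẋᵢ ∈ N_{C(t)}(xᵢ)` a.e., so `e := x₁ - x₂` has derivative
`ζ₂ - ζ₁`. Hypomonotonicity of the proximal normal cone of an `r`-prox-regular set turns this into
`d/dt ‖e‖² ≤ (‖ζ₁‖ + ‖ζ₂‖) / r * ‖e‖²` a.e., with an integrable rate. Since `‖e‖²` is absolutely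
continuous and vanishes at `t₀`, Gronwall's inequality forces `e ≡ 0`. -/

open Filter

section AbsolutelyContinuous

variable {a b : ℝ}

theorem AbsolutelyContinuousOnInterval.of_dist_le_mul {X Y : Type*} [PseudoMetricSpace X]
    [PseudoMetricSpace Y] {f : ℝ → X} {g : ℝ → Y} {C : ℝ}
    (hg : AbsolutelyContinuousOnInterval g a b)
    (h : ∀ x ∈ uIcc a b, ∀ y ∈ uIcc a b, dist (f x) (f y) ≤ C * dist (g x) (g y)) :
    AbsolutelyContinuousOnInterval f a b := by
  unfold AbsolutelyContinuousOnInterval at hg ⊢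
  refine squeeze_zero' (Eventually.of_forall fun _ ↦ Finset.sum_nonneg fun _ _ ↦ dist_nonneg)
    ?_ (by simpa using hg.const_mul C)
  rw [eventually_inf_principal]
  filter_upwards with I hI
  rw [Finset.mul_sum]
  exact Finset.sum_le_sum fun i hi ↦ h _ (hI.1 i hi).1 _ (hI.1 i hi).2

theorem IntervalIntegrable.absolutelyContinuousOnInterval_intervalIntegral' {F : Type*}
    [NormedAddCommGroup F] [NormedSpace ℝ F] {f : ℝ → F} {c : ℝ}
    (hf : IntervalIntegrable f volume a b) (hc : c ∈ uIcc a b) :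
    AbsolutelyContinuousOnInterval (fun x ↦ ∫ t in c..x, f t) a b := by
  refine (hf.norm.absolutelyContinuousOnInterval_intervalIntegral hc).of_dist_le_mul
    (C := 1) fun x hx y hy ↦ ?_
  have hsub : ∀ {u v}, u ∈ uIcc a b → v ∈ uIcc a b → IntervalIntegrable f volume u v :=
    fun hu hv ↦ hf.mono_set (uIcc_subset_uIcc hu hv)
  rw [one_mul, dist_eq_norm, dist_eq_norm, intervalIntegral.integral_interval_sub_left
    (hsub hc hx) (hsub hc hy), intervalIntegral.integral_interval_sub_left
    (hsub hc hx).norm (hsub hc hy).norm, Real.norm_eq_abs]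
  exact intervalIntegral.norm_integral_le_abs_integral_norm

theorem AbsolutelyContinuousOnInterval.norm_sq {F : Type*} [SeminormedAddCommGroup F]
    {f : ℝ → F} (hf : AbsolutelyContinuousOnInterval f a b) :
    AbsolutelyContinuousOnInterval (fun x ↦ ‖f x‖ ^ 2) a b := by
  obtain ⟨M, hM⟩ := hf.exists_bound
  refine hf.of_dist_le_mul (C := 2 * M) fun x hx y hy ↦ ?_
  rw [Real.dist_eq, sq_sub_sq, abs_mul, dist_eq_norm]
  have hsum : |‖f x‖ + ‖f y‖| ≤ 2 * M := by
    rw [abs_of_nonneg (by positivity)]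
    linarith [hM x hx, hM y hy]
  exact mul_le_mul hsum (abs_norm_sub_norm_le _ _) (abs_nonneg _) (hsum.trans' (abs_nonneg _))

theorem AbsolutelyContinuousOnInterval.exp {f : ℝ → ℝ}
    (hf : AbsolutelyContinuousOnInterval f a b) :
    AbsolutelyContinuousOnInterval (fun x ↦ Real.exp (f x)) a b := by
  obtain ⟨M, hM⟩ := hf.exists_bound
  refine hf.of_dist_le_mul (C := Real.exp M) fun x hx y hy ↦ ?_
  have hmem : ∀ z ∈ uIcc a b, f z ∈ Iic M := fun z hz ↦ (le_abs_self _).trans (hM z hz)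
  simpa [dist_eq_norm, Real.norm_eq_abs, abs_sub_comm] using
    (convex_Iic M).norm_image_sub_le_of_norm_deriv_le
      (fun _ _ ↦ Real.differentiableAt_exp) (fun z hz ↦ by
        simpa [Real.abs_exp] using Real.exp_le_exp.2 hz) (hmem y hy) (hmem x hx)

/-- Gronwall's inequality: `exp (-∫ k) * φ` is absolutely continuous with a.e. nonpositive
derivative. -/
theorem AbsolutelyContinuousOnInterval.le_mul_exp_integral_of_deriv_le {φ k : ℝ → ℝ}
    (hab : a ≤ b) (hφ : AbsolutelyContinuousOnInterval φ a b)
    (hk : IntervalIntegrable k volume a b)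
    (h : ∀ᵐ x, x ∈ Icc a b → deriv φ x ≤ k x * φ x) :
    φ b ≤ φ a * Real.exp (∫ x in a..b, k x) := by
  set K : ℝ → ℝ := fun x ↦ ∫ t in a..x, k t
  set ψ : ℝ → ℝ := fun x ↦ Real.exp (-K x) * φ x
  have hψ : AbsolutelyContinuousOnInterval ψ a b :=
    (hk.absolutelyContinuousOnInterval_intervalIntegral left_mem_uIcc).fun_neg.exp.fun_mul hφ
  have hψ' : ∀ᵐ x ∂volume.restrict (Ioc a b), deriv ψ x ≤ 0 := by
    rw [ae_restrict_iff' measurableSet_Ioc]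
    filter_upwards [hφ.ae_differentiableAt, hk.ae_hasDerivAt_integral, h] with x hφx hKx hx hxab
    have hx' : x ∈ uIcc a b := by rw [uIcc_of_le hab]; exact Ioc_subset_Icc_self hxab
    have hψx : HasDerivAt ψ (Real.exp (-K x) * -k x * φ x + Real.exp (-K x) * deriv φ x) x :=
      (hKx hx' a left_mem_uIcc).neg.exp.mul (hφx hx').hasDerivAt
    rw [hψx.deriv]
    have hφ'x := hx (Ioc_subset_Icc_self hxab)
    nlinarith [Real.exp_pos (-K x)]
  have hψ_anti : ψ b ≤ ψ a := by
    have hFTC := hψ.integral_deriv_eq_sub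
    rw [intervalIntegral.integral_of_le hab] at hFTC
    linarith [integral_nonpos_of_ae hψ']
  have hKa : K a = 0 := intervalIntegral.integral_same
  simp only [ψ, hKa, Real.exp_zero, Real.exp_neg, inv_one, one_mul] at hψ_anti
  rwa [inv_mul_le_iff₀ (Real.exp_pos _), mul_comm] at hψ_anti

end AbsolutelyContinuous

/-- `2 ⟪F, w⟫` is the a.e. derivative of `‖F‖²` for `F = ∫ w`, so this is Gronwall's inequality
for `‖F‖²`. -/
theorem intervalIntegral_eq_zero_of_two_inner_le [CompleteSpace E] {w : ℝ → E} {k : ℝ → ℝ}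
    {a b : ℝ} (hab : a ≤ b) (hw : IntervalIntegrable w volume a b)
    (hk : IntervalIntegrable k volume a b)
    (h : ∀ᵐ s, s ∈ Icc a b →
      2 * ⟪∫ τ in a..s, w τ, w s⟫ ≤ k s * ‖∫ τ in a..s, w τ‖ ^ 2) :
    ∫ τ in a..b, w τ = 0 := by
  have hderiv : ∀ᵐ s, s ∈ Icc a b →
      deriv (fun s ↦ ‖∫ τ in a..s, w τ‖ ^ 2) s ≤ k s * ‖∫ τ in a..s, w τ‖ ^ 2 := by
    filter_upwards [hw.ae_hasDerivAt_integral, h] with s hws hs hsab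
    have hs' : s ∈ uIcc a b := by rwa [uIcc_of_le hab]
    rw [(hws hs' a left_mem_uIcc).norm_sq.deriv]
    exact hs hsab
  simpa using (hw.absolutelyContinuousOnInterval_intervalIntegral'
    left_mem_uIcc).norm_sq.le_mul_exp_integral_of_deriv_le hab hk hderiv

theorem mem_neg_add_singleton_iff {α : Type*} [AddCommGroup α] {S : Set α} {u v : α} :
    u ∈ -S + {v} ↔ v - u ∈ S := by
  simp [Set.add_singleton, ← sub_eq_add_neg]

/-- Hypomonotonicity of the proximal normal cone. -/
theorem ProxRegular.inner_sub_le {r : ℝ} {K : Set E} (hK : ProxRegular r K) {x y ζ ξ : E}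
    (hζ : ζ ∈ proxNormalCone K x) (hξ : ξ ∈ proxNormalCone K y) :
    ⟪ζ - ξ, y - x⟫ ≤ (‖ζ‖ + ‖ξ‖) / (2 * r) * ‖y - x‖ ^ 2 := by
  have hx := hK x hζ.1 y hξ.1 ζ hζ
  have hy := hK y hξ.1 x hζ.1 ξ hξ
  rw [← neg_sub y x, inner_neg_right, norm_neg] at hy
  rw [inner_sub_left, add_div, add_mul]
  have e : ∀ c : ℝ, 1 / (2 * r) * c = c / (2 * r) := fun c ↦ by ring
  rw [e] at hx hy
  linarith

theorem ProxRegular.two_inner_sub_le {r : ℝ} {K : Set E} (hK : ProxRegular r K)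
    {x₁ x₂ u₁ u₂ v : E} (hu₁ : u₁ ∈ -proxNormalCone K x₁ + {v})
    (hu₂ : u₂ ∈ -proxNormalCone K x₂ + {v}) :
    2 * ⟪x₁ - x₂, u₁ - u₂⟫ ≤ (‖v - u₁‖ + ‖v - u₂‖) / r * ‖x₁ - x₂‖ ^ 2 := by
  have h := hK.inner_sub_le (mem_neg_add_singleton_iff.1 hu₁) (mem_neg_add_singleton_iff.1 hu₂)
  rw [sub_sub_sub_cancel_left, ← neg_sub x₁ x₂, ← neg_sub u₁ u₂, inner_neg_neg,
    real_inner_comm, norm_neg] at h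
  calc 2 * ⟪x₁ - x₂, u₁ - u₂⟫
      ≤ 2 * ((‖v - u₁‖ + ‖v - u₂‖) / (2 * r) * ‖x₁ - x₂‖ ^ 2) := by gcongr
    _ = (‖v - u₁‖ + ‖v - u₂‖) / r * ‖x₁ - x₂‖ ^ 2 := by field_simp

theorem sweeping_process_uniqueness_general {n : ℕ} (r L_C : ℝ)
    (C : ℝ → Set (EuclideanSpace ℝ (Fin n))) (hC : HypC r L_C C)
    (t0 T : ℝ) (ht0 : 0 ≤ t0)
    (v : ℝ → EuclideanSpace ℝ (Fin n)) (hv : LocallyIntegrableOn v (Ici t0))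
    (x₁ x₂ : ℝ → EuclideanSpace ℝ (Fin n))
    (hsol₁ : ∃ x' : ℝ → EuclideanSpace ℝ (Fin n), IntegrableOn x' (Icc t0 T) ∧
      (∀ t ∈ Icc t0 T, x₁ t = x₁ t0 + ∫ s in t0..t, x' s) ∧
      ∀ᵐ t ∂(volume.restrict (Icc t0 T)),
        x' t ∈ -proxNormalCone (C t) (x₁ t) + {v t})
    (hsol₂ : ∃ x' : ℝ → EuclideanSpace ℝ (Fin n), IntegrableOn x' (Icc t0 T) ∧
      (∀ t ∈ Icc t0 T, x₂ t = x₂ t0 + ∫ s in t0..t, x' s) ∧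
      ∀ᵐ t ∂(volume.restrict (Icc t0 T)),
        x' t ∈ -proxNormalCone (C t) (x₂ t) + {v t})
    (hinit : x₁ t0 = x₂ t0) :
    ∀ t ∈ Icc t0 T, x₁ t = x₂ t := by
  obtain ⟨f₁, hf₁, hx₁, hinc₁⟩ := hsol₁
  obtain ⟨f₂, hf₂, hx₂, hinc₂⟩ := hsol₂
  have hsub : ∀ t ∈ Icc t0 T, uIcc t0 t ⊆ Icc t0 T := fun t ht ↦
    uIcc_subset_Icc (left_mem_Icc.2 (ht.1.trans ht.2)) ht
  have hgap : ∀ t ∈ Icc t0 T, x₁ t - x₂ t = ∫ s in t0..t, (f₁ s - f₂ s) := fun t ht ↦ by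
    rw [hx₁ t ht, hx₂ t ht, hinit, add_sub_add_left_eq_sub,
      intervalIntegral.integral_sub (hf₁.mono_set (hsub t ht)).intervalIntegrable
      (hf₂.mono_set (hsub t ht)).intervalIntegrable]
  have hvT : IntegrableOn v (Icc t0 T) :=
    hv.integrableOn_compact_subset Icc_subset_Ici_self isCompact_Icc
  have hk : IntegrableOn (fun s ↦ (‖v s - f₁ s‖ + ‖v s - f₂ s‖) / r) (Icc t0 T) :=
    ((hvT.sub hf₁).norm.add (hvT.sub hf₂).norm).div_const r
  intro t ht
  rw [← sub_eq_zero, hgap t ht]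
  refine intervalIntegral_eq_zero_of_two_inner_le ht.1
    ((hf₁.sub hf₂).mono_set (hsub t ht)).intervalIntegrable
    (hk.mono_set (hsub t ht)).intervalIntegrable ?_
  rw [ae_restrict_iff' measurableSet_Icc] at hinc₁ hinc₂
  filter_upwards [hinc₁, hinc₂] with s hs₁ hs₂ hs
  have hsT : s ∈ Icc t0 T := ⟨hs.1, hs.2.trans ht.2⟩
  rw [← hgap s hsT]
  exact (hC.proxRegular s (ht0.trans hs.1)).two_inner_sub_le (hs₁ hsT) (hs₂ hsT)

/-- Under Hypothesis (H_C), the sweeping process with a locally integrable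
single-valued perturbation `v` has at most one solution from a given initial condition. -/
theorem sweeping_process_uniqueness {n : ℕ} (r L_C : ℝ) (hr : 0 < r)
    (C : ℝ → Set (EuclideanSpace ℝ (Fin n))) (hC : HypC r L_C C)
    (t0 T : ℝ) (ht0 : 0 ≤ t0)
    (v : ℝ → EuclideanSpace ℝ (Fin n)) (hv : LocallyIntegrableOn v (Ici t0))
    (x₁ x₂ : ℝ → EuclideanSpace ℝ (Fin n))
    (hmem₁ : ∀ t ∈ Icc t0 T, x₁ t ∈ C t)
    (hmem₂ : ∀ t ∈ Icc t0 T, x₂ t ∈ C t)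
    (hsol₁ : ∃ x' : ℝ → EuclideanSpace ℝ (Fin n), IntegrableOn x' (Icc t0 T) ∧
      (∀ t ∈ Icc t0 T, x₁ t = x₁ t0 + ∫ s in t0..t, x' s) ∧
      ∀ᵐ t ∂(volume.restrict (Icc t0 T)),
        x' t ∈ -proxNormalCone (C t) (x₁ t) + {v t})
    (hsol₂ : ∃ x' : ℝ → EuclideanSpace ℝ (Fin n), IntegrableOn x' (Icc t0 T) ∧
      (∀ t ∈ Icc t0 T, x₂ t = x₂ t0 + ∫ s in t0..t, x' s) ∧
      ∀ᵐ t ∂(volume.restrict (Icc t0 T)),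
        x' t ∈ -proxNormalCone (C t) (x₂ t) + {v t})
    (hinit : x₁ t0 = x₂ t0) :
    ∀ t ∈ Icc t0 T, x₁ t = x₂ t :=
  sweeping_process_uniqueness_general r L_C C hC t0 T ht0 v hv x₁ x₂ hsol₁ hsol₂ hinit
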